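/- Let G be a finite graph on n ≥ 2 vertices with labels assigned by a uniform random permutation, and let R_diff(t) = R₁(t) − R₂(t). Then Var(R_diff(t)) = [t(n−t)/(n(n−1))] · ( Σᵢ|Gᵢ|² − 4|G|²/n ). -/
import Mathlib

open Finset
open scoped Classical

noncomputable section

/-- Label of vertex `v` under permutation `π`: a value in `{1,...,n}`. -/
def lab {n : ℕ} (π : Equiv.Perm (Fin n)) (v : Fin n) : ℕ := (π v).val + 1

/-- Number of edges of `G` with both endpoint labels `≤ t`. -/
def R1 {n : ℕ} (G : SimpleGraph (Fin n)) (t : ℕ) (π : Equiv.Perm (Fin n)) : ℕ :=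
  (G.edgeFinset.filter (fun e => ∀ v ∈ e, lab π v ≤ t)).card

/-- Number of edges of `G` with both endpoint labels `> t`. -/
def R2 {n : ℕ} (G : SimpleGraph (Fin n)) (t : ℕ) (π : Equiv.Perm (Fin n)) : ℕ :=
  (G.edgeFinset.filter (fun e => ∀ v ∈ e, t < lab π v)).card

/-- Number of edges of `G` with one endpoint label `≤ t` and the other `> t`. -/
def R0 {n : ℕ} (G : SimpleGraph (Fin n)) (t : ℕ) (π : Equiv.Perm (Fin n)) : ℕ :=
  (G.edgeFinset.filter (fun e => (∃ v ∈ e, lab π v ≤ t) ∧ (∃ v ∈ e, t < lab π v))).card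

/-- Expectation under the permutation null distribution (uniform over all `n!` permutations). -/
def Ex {n : ℕ} (f : Equiv.Perm (Fin n) → ℝ) : ℝ :=
  (∑ π : Equiv.Perm (Fin n), f π) / (Nat.factorial n)

/-- Variance under the permutation null distribution. -/
def Var {n : ℕ} (f : Equiv.Perm (Fin n) → ℝ) : ℝ := Ex (fun π => (f π - Ex f) ^ 2)

/-- Covariance under the permutation null distribution. -/
def Cov {n : ℕ} (f g : Equiv.Perm (Fin n) → ℝ) : ℝ :=
  Ex (fun π => (f π - Ex f) * (g π - Ex g))

/-- Difference of within-group edge counts `R_diff(t) = R₁(t) - R₂(t)`. -/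
def Rdiff {n : ℕ} (G : SimpleGraph (Fin n)) (t : ℕ) (π : Equiv.Perm (Fin n)) : ℝ :=
  (R1 G t π : ℝ) - (R2 G t π : ℝ)


namespace VarianceRdiffAux

variable {n : ℕ}

def X {n : ℕ} (t : ℕ) (π : Equiv.Perm (Fin n)) (v : Fin n) : ℝ :=
  if (π v : ℕ) < t then 1 else 0

variable {n : ℕ}

lemma dart_sum_fst (G : SimpleGraph (Fin n)) (f : Fin n → ℝ) :
    ∑ d : G.Dart, f d.fst = ∑ v : Fin n, (G.degree v : ℝ) * f v := by
  rw [← Finset.sum_fiberwise (univ : Finset G.Dart) (fun d => d.fst) (fun d => f d.fst)]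
  refine Finset.sum_congr rfl fun v _ => ?_
  have h1 : ∀ d ∈ (univ : Finset G.Dart).filter (fun d => d.fst = v),
      f d.fst = f v := by
    intro d hd
    rw [Finset.mem_filter] at hd
    rw [hd.2]
  rw [Finset.sum_congr rfl h1, Finset.sum_const, nsmul_eq_mul]
  congr 1
  have := G.dart_fst_fiber_card_eq_degree v
  simpa using congrArg (Nat.cast : ℕ → ℝ) this

def esum (f : Fin n → ℝ) : Sym2 (Fin n) → ℝ :=
  Sym2.lift ⟨fun u v => f u + f v, fun u v => by ring⟩

lemma dart_sum_edge (G : SimpleGraph (Fin n)) (f : Fin n → ℝ) :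
    ∑ d : G.Dart, f d.fst = ∑ e ∈ G.edgeFinset, esum f e := by
  rw [← Finset.sum_fiberwise_of_maps_to
    (fun (d : G.Dart) (_ : d ∈ univ) => (SimpleGraph.mem_edgeFinset).2 d.edge_mem)
    (fun d => f d.fst)]
  refine Finset.sum_congr rfl fun e he => ?_
  rw [SimpleGraph.mem_edgeFinset] at he
  induction e with
  | _ u v =>
    have hadj : G.Adj u v := he
    set d : G.Dart := ⟨(u, v), hadj⟩ with hd
    have hedge : d.edge = s(u, v) := rfl
    have hfib : (univ : Finset G.Dart).filter (fun d' => d'.edge = s(u, v)) = {d, d.symm} := by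
      rw [← hedge]
      exact_mod_cast d.edge_fiber
    rw [hfib, Finset.sum_pair d.symm_ne.symm]
    simp [esum, SimpleGraph.Dart.symm, d, hd]


lemma sum_perm_comp (g : Equiv.Perm (Fin n) → ℝ) (σ : Equiv.Perm (Fin n)) :
    ∑ π : Equiv.Perm (Fin n), g (π * σ) = ∑ π : Equiv.Perm (Fin n), g π :=
  Fintype.sum_equiv (Equiv.mulRight σ) _ _ (fun _ => rfl)

lemma E1 (g : Fin n → ℝ) (v : Fin n) :
    (n : ℝ) * ∑ π : Equiv.Perm (Fin n), g (π v)
      = (Nat.factorial n : ℝ) * ∑ k : Fin n, g k := by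
  have hconst : ∀ w : Fin n,
      (∑ π : Equiv.Perm (Fin n), g (π w)) = ∑ π : Equiv.Perm (Fin n), g (π v) := by
    intro w
    have h := sum_perm_comp (fun π => g (π v)) (Equiv.swap v w)
    simpa [Equiv.Perm.mul_apply, Equiv.swap_apply_left] using h
  have h1 : ∑ w : Fin n, ∑ π : Equiv.Perm (Fin n), g (π w)
      = (n : ℝ) * ∑ π : Equiv.Perm (Fin n), g (π v) := by
    rw [Finset.sum_congr rfl (fun w _ => hconst w), Finset.sum_const]
    simp [mul_comm]
  rw [← h1, Finset.sum_comm]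
  have h2 : ∀ π : Equiv.Perm (Fin n), ∑ w : Fin n, g (π w) = ∑ k : Fin n, g k :=
    fun π => Equiv.sum_comp π g
  rw [Finset.sum_congr rfl (fun π _ => h2 π), Finset.sum_const]
  simp [Fintype.card_perm, mul_comm]

lemma exists_perm_two {u v u' v' : Fin n} (h : u ≠ v) (h' : u' ≠ v') :
    ∃ σ : Equiv.Perm (Fin n), σ u = u' ∧ σ v = v' := by
  set b : Fin n := Equiv.swap u u' v with hb
  have hub : u' ≠ b := by
    intro hc
    have h2 : Equiv.swap u u' u = Equiv.swap u u' v := by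
      rw [Equiv.swap_apply_left]; exact hc.trans hb
    exact h (Equiv.injective _ h2)
  refine ⟨(Equiv.swap b v') * (Equiv.swap u u'), ?_, ?_⟩
  · rw [Equiv.Perm.mul_apply, Equiv.swap_apply_left,
      Equiv.swap_apply_of_ne_of_ne hub h']
  · rw [Equiv.Perm.mul_apply, ← hb, Equiv.swap_apply_left]

lemma E2 (g : Fin n → Fin n → ℝ) {u v : Fin n} (huv : u ≠ v) :
    ((n : ℝ) * ((n : ℝ) - 1)) * ∑ π : Equiv.Perm (Fin n), g (π u) (π v)
      = (Nat.factorial n : ℝ) * ∑ p ∈ (univ : Finset (Fin n)).offDiag, g p.1 p.2 := by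
  have hn1 : 1 ≤ n := Fin.pos u
  have hconst : ∀ p ∈ (univ : Finset (Fin n)).offDiag,
      (∑ π : Equiv.Perm (Fin n), g (π p.1) (π p.2))
        = ∑ π : Equiv.Perm (Fin n), g (π u) (π v) := by
    rintro ⟨u', v'⟩ hp
    rw [Finset.mem_offDiag] at hp
    obtain ⟨σ, hσ1, hσ2⟩ := exists_perm_two huv hp.2.2
    have h := sum_perm_comp (fun π => g (π u) (π v)) σ
    simpa [Equiv.Perm.mul_apply, hσ1, hσ2] using h
  have h1 : ∑ p ∈ (univ : Finset (Fin n)).offDiag,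
      (∑ π : Equiv.Perm (Fin n), g (π p.1) (π p.2))
      = ((n : ℝ) * ((n : ℝ) - 1)) * ∑ π : Equiv.Perm (Fin n), g (π u) (π v) := by
    rw [Finset.sum_congr rfl hconst, Finset.sum_const, nsmul_eq_mul]
    congr 1
    rw [Finset.offDiag_card]
    simp only [Finset.card_univ, Fintype.card_fin]
    push_cast [Nat.cast_sub (Nat.le_mul_of_pos_left n hn1)]
    ring
  rw [← h1, Finset.sum_comm]
  have h2 : ∀ π : Equiv.Perm (Fin n),
      ∑ p ∈ (univ : Finset (Fin n)).offDiag, g (π p.1) (π p.2)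
        = ∑ p ∈ (univ : Finset (Fin n)).offDiag, g p.1 p.2 := by
    intro π
    refine Finset.sum_nbij' (fun p => (π p.1, π p.2)) (fun p => (π⁻¹ p.1, π⁻¹ p.2))
      ?_ ?_ ?_ ?_ ?_
    · rintro ⟨a, b⟩ hp
      rw [Finset.mem_offDiag] at hp ⊢
      exact ⟨mem_univ _, mem_univ _, fun hc => hp.2.2 (π.injective hc)⟩
    · rintro ⟨a, b⟩ hp
      rw [Finset.mem_offDiag] at hp ⊢
      exact ⟨mem_univ _, mem_univ _, fun hc => hp.2.2 (π⁻¹.injective hc)⟩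
    · rintro ⟨a, b⟩ _; simp
    · rintro ⟨a, b⟩ _; simp
    · rintro ⟨a, b⟩ _; rfl
  rw [Finset.sum_congr rfl (fun π _ => h2 π), Finset.sum_const]
  simp [Fintype.card_perm, mul_comm]


lemma fact_ne : ((Nat.factorial n : ℝ)) ≠ 0 := by
  exact_mod_cast Nat.factorial_ne_zero n

lemma Ex_sum {ι : Type*} (s : Finset ι) (F : ι → Equiv.Perm (Fin n) → ℝ) :
    Ex (fun π => ∑ i ∈ s, F i π) = ∑ i ∈ s, Ex (F i) := by
  unfold Ex
  rw [Finset.sum_comm, Finset.sum_div]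

lemma Ex_const (c : ℝ) : Ex (fun _ : Equiv.Perm (Fin n) => c) = c := by
  unfold Ex
  rw [Finset.sum_const, card_univ, Fintype.card_perm, Fintype.card_fin, nsmul_eq_mul,
    mul_div_cancel_left₀ _ fact_ne]

lemma Ex_const_mul (c : ℝ) (f : Equiv.Perm (Fin n) → ℝ) :
    Ex (fun π => c * f π) = c * Ex f := by
  unfold Ex
  rw [← Finset.mul_sum, mul_div_assoc]

lemma Ex_sub (f g : Equiv.Perm (Fin n) → ℝ) :
    Ex (fun π => f π - g π) = Ex f - Ex g := by
  unfold Ex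
  rw [Finset.sum_sub_distrib, sub_div]

lemma Ex_add (f g : Equiv.Perm (Fin n) → ℝ) :
    Ex (fun π => f π + g π) = Ex f + Ex g := by
  unfold Ex
  rw [Finset.sum_add_distrib, add_div]

lemma sum_ind (t : ℕ) (ht2 : t < n) :
    ∑ k : Fin n, (if (k : ℕ) < t then (1 : ℝ) else 0) = t := by
  rw [Finset.sum_boole]
  congr 1
  have h : Finset.filter (fun x : Fin n => (x : ℕ) < t) Finset.univ
      = Finset.Iio (⟨t, ht2⟩ : Fin n) := by
    ext k
    simp [Fin.lt_def]
  rw [h, Fin.card_Iio]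

lemma Ex_X (t : ℕ) (ht2 : t < n) (v : Fin n) :
    Ex (fun π => X t π v) = (t : ℝ) / n := by
  have hn : (n : ℝ) ≠ 0 := by
    have := Fin.pos v; positivity
  have h := E1 (fun k : Fin n => if (k : ℕ) < t then (1 : ℝ) else 0) v
  rw [sum_ind t ht2] at h
  unfold Ex X
  rw [div_eq_div_iff fact_ne hn]
  nlinarith [h]

lemma sum_ind2 (t : ℕ) (ht2 : t < n) :
    ∑ p ∈ (univ : Finset (Fin n)).offDiag,
      ((if (p.1 : ℕ) < t then (1 : ℝ) else 0) * (if (p.2 : ℕ) < t then (1 : ℝ) else 0))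
      = (t : ℝ) * t - t := by
  have hoff : (univ : Finset (Fin n)).offDiag
      = (univ ×ˢ univ : Finset (Fin n × Fin n)).filter (fun p => p.1 ≠ p.2) := by
    ext p
    simp [Finset.mem_offDiag]
  rw [hoff, Finset.sum_filter]
  rw [Finset.sum_product]
  have key : ∀ a : Fin n,
      (∑ b : Fin n, if a ≠ b then
        ((if (a : ℕ) < t then (1 : ℝ) else 0) * (if (b : ℕ) < t then (1 : ℝ) else 0)) else 0)
      = (if (a : ℕ) < t then (1 : ℝ) else 0) * ((t : ℝ) - (if (a : ℕ) < t then (1 : ℝ) else 0)) := by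
    intro a
    have hsplit : ∀ b : Fin n,
        (if a ≠ b then
          ((if (a : ℕ) < t then (1 : ℝ) else 0) * (if (b : ℕ) < t then (1 : ℝ) else 0)) else 0)
        = (if (a : ℕ) < t then (1 : ℝ) else 0) * (if (b : ℕ) < t then (1 : ℝ) else 0)
          - (if a = b then
              ((if (a : ℕ) < t then (1 : ℝ) else 0) * (if (b : ℕ) < t then (1 : ℝ) else 0)) else 0) := by
      intro b
      by_cases hab : a = b <;> simp [hab]
    rw [Finset.sum_congr rfl (fun b _ => hsplit b), Finset.sum_sub_distrib,
      ← Finset.mul_sum, sum_ind t ht2, Finset.sum_ite_eq (univ : Finset (Fin n)) a]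
    simp only [mem_univ, if_true]
    by_cases h : (a : ℕ) < t <;> simp [h]
  rw [Finset.sum_congr rfl (fun a _ => key a)]
  have expand : ∀ a : Fin n,
      (if (a : ℕ) < t then (1 : ℝ) else 0) * ((t : ℝ) - (if (a : ℕ) < t then (1 : ℝ) else 0))
      = (t : ℝ) * (if (a : ℕ) < t then (1 : ℝ) else 0) - (if (a : ℕ) < t then (1 : ℝ) else 0) := by
    intro a; by_cases h : (a : ℕ) < t <;> simp [h]
  rw [Finset.sum_congr rfl (fun a _ => expand a), Finset.sum_sub_distrib, ← Finset.mul_sum,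
    sum_ind t ht2]

lemma Ex_XX (t : ℕ) (ht2 : t < n) {u v : Fin n} (huv : u ≠ v) :
    Ex (fun π => X t π u * X t π v) = ((t : ℝ) * t - t) / ((n : ℝ) * ((n : ℝ) - 1)) := by
  have hn : (n : ℝ) ≠ 0 := by have := Fin.pos v; positivity
  have hn2 : 2 ≤ n := by
    by_contra h
    push_neg at h
    interval_cases n
    · exact absurd u.pos (by omega)
    · exact huv (Subsingleton.elim u v)
  have hn1 : (n : ℝ) * ((n : ℝ) - 1) ≠ 0 := by
    have h2 : (2 : ℝ) ≤ (n : ℝ) := by exact_mod_cast hn2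
    nlinarith
  have h := E2 (fun a b : Fin n =>
    (if (a : ℕ) < t then (1 : ℝ) else 0) * (if (b : ℕ) < t then (1 : ℝ) else 0)) huv
  rw [sum_ind2 t ht2] at h
  unfold Ex X
  rw [div_eq_div_iff fact_ne hn1]
  nlinarith [h]


lemma Rdiff_eq (G : SimpleGraph (Fin n)) (t : ℕ) (π : Equiv.Perm (Fin n)) :
    Rdiff G t π = (∑ v : Fin n, (G.degree v : ℝ) * X t π v) - (G.edgeFinset.card : ℝ) := by
  rw [← dart_sum_fst, dart_sum_edge]
  unfold Rdiff R1 R2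
  rw [Finset.card_filter, Finset.card_filter, Nat.cast_sum, Nat.cast_sum,
    ← Finset.sum_sub_distrib]
  have hcard : (G.edgeFinset.card : ℝ) = ∑ _e ∈ G.edgeFinset, (1 : ℝ) := by
    simp
  rw [hcard, ← Finset.sum_sub_distrib]
  refine Finset.sum_congr rfl fun e _ => ?_
  induction e with
  | _ u v =>
    simp only [Sym2.mem_iff, forall_eq_or_imp, forall_eq, lab, esum, Sym2.lift_mk, X,
      Nat.add_one_le_iff, Nat.lt_add_one_iff, ← Nat.not_lt]
    by_cases h1 : (π u : ℕ) < t <;> by_cases h2 : (π v : ℕ) < t <;>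
      simp [h1, h2]


end VarianceRdiffAux

open VarianceRdiffAux in
theorem variance_Rdiff (n t : ℕ) (hn : 2 ≤ n) (ht1 : 1 ≤ t) (ht2 : t < n)
    (G : SimpleGraph (Fin n)) :
    Var (fun π => Rdiff G t π) =
      (t : ℝ) * ((n : ℝ) - (t : ℝ)) / ((n : ℝ) * ((n : ℝ) - 1))
      * ((∑ i : Fin n, (G.degree i : ℝ) ^ 2)
          - 4 * (G.edgeFinset.card : ℝ) ^ 2 / (n : ℝ)) := by
  have hn0 : (n : ℝ) ≠ 0 := by positivity
  have hn1 : (n : ℝ) - 1 ≠ 0 := by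
    have : (2 : ℝ) ≤ (n : ℝ) := by exact_mod_cast hn
    nlinarith
  set μ : ℝ := (t : ℝ) / n with hμ
  set p2 : ℝ := ((t : ℝ) * t - t) / ((n : ℝ) * ((n : ℝ) - 1)) with hp2
  have hEx : Ex (fun π => Rdiff G t π)
      = (∑ v : Fin n, (G.degree v : ℝ) * μ) - (G.edgeFinset.card : ℝ) := by
    simp only [Rdiff_eq]
    rw [Ex_sub, Ex_const, Ex_sum]
    congr 1
    refine Finset.sum_congr rfl fun v _ => ?_
    rw [Ex_const_mul, Ex_X t ht2]
  have hdev : ∀ π : Equiv.Perm (Fin n),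
      Rdiff G t π - Ex (fun π => Rdiff G t π)
        = ∑ v : Fin n, (G.degree v : ℝ) * (X t π v - μ) := by
    intro π
    rw [Rdiff_eq, hEx]
    rw [show (∑ v : Fin n, (G.degree v : ℝ) * (X t π v - μ))
        = (∑ v : Fin n, ((G.degree v : ℝ) * X t π v - (G.degree v : ℝ) * μ)) from
      Finset.sum_congr rfl fun v _ => by ring]
    rw [Finset.sum_sub_distrib]
    ring
  have hVar : Var (fun π => Rdiff G t π)
      = ∑ u : Fin n, ∑ v : Fin n,
          ((G.degree u : ℝ) * (G.degree v : ℝ))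
            * Ex (fun π => (X t π u - μ) * (X t π v - μ)) := by
    unfold Var
    rw [show (fun π => (Rdiff G t π - Ex (fun π => Rdiff G t π)) ^ 2)
        = (fun π => ∑ u : Fin n, ∑ v : Fin n,
            ((G.degree u : ℝ) * (G.degree v : ℝ))
              * ((X t π u - μ) * (X t π v - μ))) from ?_]
    · rw [Ex_sum]
      refine Finset.sum_congr rfl fun u _ => ?_
      rw [Ex_sum]
      refine Finset.sum_congr rfl fun v _ => ?_
      rw [Ex_const_mul]
    · funext π
      rw [hdev π, sq, Finset.sum_mul_sum]
      refine Finset.sum_congr rfl fun u _ => Finset.sum_congr rfl fun v _ => by ring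
  have hq : ∀ u v : Fin n,
      Ex (fun π => (X t π u - μ) * (X t π v - μ))
        = Ex (fun π => X t π u * X t π v) - μ ^ 2 := by
    intro u v
    have hpt : (fun π : Equiv.Perm (Fin n) => (X t π u - μ) * (X t π v - μ))
        = fun π => X t π u * X t π v - μ * X t π u - μ * X t π v + μ * μ := by
      funext π; ring
    rw [hpt, Ex_add, Ex_sub, Ex_sub, Ex_const, Ex_const_mul, Ex_const_mul,
      Ex_X t ht2, Ex_X t ht2]
    rw [hμ]; ring
  have hXsq : ∀ v : Fin n,
      Ex (fun π => X t π v * X t π v) = μ := by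
    intro v
    have h1 : (fun π : Equiv.Perm (Fin n) => X t π v * X t π v)
        = fun π => X t π v := by
      funext π
      unfold X
      by_cases h : ((π v : ℕ) < t) <;> simp [h]
    rw [h1, Ex_X t ht2]
  have hsplit : ∀ u v : Fin n,
      ((G.degree u : ℝ) * (G.degree v : ℝ))
          * Ex (fun π => (X t π u - μ) * (X t π v - μ))
        = ((G.degree u : ℝ) * (G.degree v : ℝ)) * (p2 - μ ^ 2)
          + (if v = u then ((G.degree u : ℝ) * (G.degree u : ℝ)) * (μ - p2) else 0) := by
    intro u v
    by_cases h : v = u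
    · subst h
      rw [hq, hXsq, if_pos rfl]
      ring
    · rw [hq, Ex_XX t ht2 (fun hc' => h hc'.symm), if_neg h, ← hp2]
      ring
  rw [hVar]
  rw [Finset.sum_congr rfl fun u _ => Finset.sum_congr rfl fun v _ => hsplit u v]
  have hsum1 : ∀ u : Fin n,
      (∑ v : Fin n, (((G.degree u : ℝ) * (G.degree v : ℝ)) * (p2 - μ ^ 2)
          + (if v = u then ((G.degree u : ℝ) * (G.degree u : ℝ)) * (μ - p2) else 0)))
        = (G.degree u : ℝ) * ((∑ v : Fin n, (G.degree v : ℝ)) * (p2 - μ ^ 2))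
          + ((G.degree u : ℝ)) ^ 2 * (μ - p2) := by
    intro u
    rw [Finset.sum_add_distrib, Finset.sum_ite_eq' (univ : Finset (Fin n)) u]
    rw [show (∑ v : Fin n, ((G.degree u : ℝ) * (G.degree v : ℝ)) * (p2 - μ ^ 2))
        = ∑ v : Fin n, ((G.degree u : ℝ) * (p2 - μ ^ 2)) * (G.degree v : ℝ) from
      Finset.sum_congr rfl fun v _ => by ring]
    rw [← Finset.mul_sum]
    simp only [mem_univ, if_true]
    ring
  rw [Finset.sum_congr rfl fun u _ => hsum1 u, Finset.sum_add_distrib]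
  have h2C : (∑ v : Fin n, (G.degree v : ℝ)) = 2 * (G.edgeFinset.card : ℝ) := by
    have h := G.sum_degrees_eq_twice_card_edges
    rw [show (2 : ℝ) * (G.edgeFinset.card : ℝ) = ((2 * G.edgeFinset.card : ℕ) : ℝ) by
        push_cast; ring, ← h]
    push_cast
    rfl
  rw [h2C]
  rw [show (∑ u : Fin n, (G.degree u : ℝ)
        * (2 * (G.edgeFinset.card : ℝ) * (p2 - μ ^ 2)))
      = (∑ u : Fin n, (G.degree u : ℝ))
        * (2 * (G.edgeFinset.card : ℝ) * (p2 - μ ^ 2)) from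
    (Finset.sum_mul _ _ _).symm]
  rw [h2C]
  rw [show (∑ u : Fin n, ((G.degree u : ℝ)) ^ 2 * (μ - p2))
      = (∑ u : Fin n, ((G.degree u : ℝ)) ^ 2) * (μ - p2) from
    (Finset.sum_mul _ _ _).symm]
  rw [hμ, hp2]
  field_simp
  ring
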